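/- Let X be a metric space, equip X × X with the metric d((x₁, x₂), (y₁, y₂)) = d(x₁, y₁) + d(x₂, y₂), and define the dual Wasserstein functional W(p, q) := sup over all bounded 1-Lipschitz functions f of (∫ f dq − ∫ f dp) on the relevant space. Let (Y, 𝒴, σ) be a probability space and let G, Π : Y → (Borel probability measures on X) be two families such that the maps y ↦ W(G(y), Π(y)) and y ↦ W(G(y) ⊗ G(y), (1/2)(Π(y) ⊗ G(y)) + (1/2)(G(y) ⊗ Π(y))) are σ-measurable and σ-integrable. Then ∫ W(G(y) ⊗ G(y), (1/2)(Π(y) ⊗ G(y)) + (1/2)(G(y) ⊗ Π(y))) dσ(y) = 0 holds if and only if ∫ W(G(y), Π(y)) dσ(y) = 0. -/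

import Mathlib

open MeasureTheory
open scoped ENNReal

/-- The dual Wasserstein functional: the supremum, over all bounded 1-Lipschitz
functions `f`, of `∫ f dq - ∫ f dp`, taken in `[-∞, ∞]`. -/
noncomputable def dualW {X : Type*} [MetricSpace X] [MeasurableSpace X]
    (p q : Measure X) : EReal :=
  ⨆ f : {f : X → ℝ // (∃ C, ∀ x, |f x| ≤ C) ∧ LipschitzWith 1 f},
    (((∫ x, f.1 x ∂q) - ∫ x, f.1 x ∂p : ℝ) : EReal)

/-- `WithLp 1 (α × β)` (the product equipped with the ℓ¹ metric
`d ((x₁, x₂), (y₁, y₂)) = d x₁ y₁ + d x₂ y₂`) carries the product σ-algebra. -/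
instance withLpProdMeasurableSpace {α β : Type*} [MeasurableSpace α] [MeasurableSpace β] :
    MeasurableSpace (WithLp 1 (α × β)) := MeasurableSpace.comap WithLp.ofLp Prod.instMeasurableSpace

/-- Conversion from `EReal` to `ℝ≥0∞`, sending `⊤` to `⊤` and every `x ≤ 0` to `0`;
used to integrate extended-real-valued nonnegative functions. -/
noncomputable def erealToENNReal (x : EReal) : ℝ≥0∞ :=
  if x = ⊤ then ⊤ else ENNReal.ofReal x.toReal

/-!
Both integrands are nonnegative, so each integral vanishes iff its integrand vanishes σ-a.e.;
it suffices to show that for Borel probability measures `p, q` the two distances vanish together.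
If `W(p, q) = 0`, then `p = q`, because bounded `1`-Lipschitz functions (rescaled thickened
indicators of closed sets) separate finite Borel measures; the mixture is then `p ⊗ p`.
Conversely, `(x₁, x₂) ↦ f x₁` is `1`-Lipschitz for the ℓ¹ metric, and testing the mini-batch
distance against it gives `(∫ f dq - ∫ f dp) / 2 ≤ 0`.
-/

open Filter Topology BoundedContinuousFunction

theorem MeasureTheory.Measure.ext_of_forall_integral_lipschitzWith_eq {X : Type*}
    [PseudoMetricSpace X] [MeasurableSpace X] [BorelSpace X] {μ ν : Measure X}
    [IsFiniteMeasure μ] [IsFiniteMeasure ν]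
    (h : ∀ f : X → ℝ, (∃ C, ∀ x, |f x| ≤ C) → LipschitzWith 1 f → ∫ x, f x ∂μ = ∫ x, f x ∂ν) :
    μ = ν := by
  have hδ : ∀ n : ℕ, 0 < 1 / ((n : ℝ) + 1) := fun n => Nat.one_div_pos_of_nat
  have closed_eq : ∀ F, IsClosed F → μ F = ν F := by
    intro F hF
    set φ : ℕ → X →ᵇ NNReal := fun n => thickenedIndicator (hδ n) F
    have lintegral_eq : ∀ n, ∫⁻ x, φ n x ∂μ = ∫⁻ x, φ n x ∂ν := by
      intro n
      -- scaling by the thickening radius makes the indicator `1`-Lipschitz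
      have hlip : LipschitzWith 1 fun x => 1 / ((n : ℝ) + 1) * (φ n x : ℝ) := by
        have := (lipschitzWith_smul (1 / ((n : ℝ) + 1))).comp
          (isometry_subtype_coe.lipschitz.comp (lipschitzWith_thickenedIndicator (hδ n) F))
        rwa [one_mul, Real.nnnorm_of_nonneg (hδ n).le, ← Real.toNNReal_of_nonneg (hδ n).le,
          mul_inv_cancel₀ (by simpa using hδ n)] at this
      have hb : ∃ C, ∀ x, |1 / ((n : ℝ) + 1) * (φ n x : ℝ)| ≤ C :=
        ⟨1 / ((n : ℝ) + 1), fun x => by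
          rw [abs_of_nonneg (by positivity)]
          exact mul_le_of_le_one_right (hδ n).le (thickenedIndicator_le_one _ F x)⟩
      have := h _ hb hlip
      rw [integral_const_mul, integral_const_mul, mul_right_inj' (hδ n).ne'] at this
      rw [← ENNReal.toReal_eq_toReal_iff' (lintegral_lt_top_of_nnreal μ _).ne
        (lintegral_lt_top_of_nnreal ν _).ne, toReal_lintegral_coe_eq_integral,
        toReal_lintegral_coe_eq_integral, this]
    have tendsto_measure : ∀ (ρ : Measure X) [IsFiniteMeasure ρ],
        Tendsto (fun n => ∫⁻ x, φ n x ∂ρ) atTop (𝓝 (ρ F)) := fun ρ _ =>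
      measure_of_cont_bdd_of_tendsto_indicator ρ hF.measurableSet φ
        (fun n => thickenedIndicator_le_one _ F) (hF.closure_eq ▸
          thickenedIndicator_tendsto_indicator_closure hδ tendsto_one_div_add_atTop_nhds_zero_nat F)
    exact tendsto_nhds_unique (tendsto_measure μ)
      (by simpa only [lintegral_eq] using tendsto_measure ν)
  refine ext_of_generate_finite _ ?_ isPiSystem_isClosed (fun F hF => closed_eq F hF)
    (closed_eq _ isClosed_univ)
  rw [BorelSpace.measurable_eq (α := X), borel_eq_generateFrom_isClosed]

section dualW

variable {X : Type*} [MetricSpace X] [MeasurableSpace X]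

lemma le_dualW (p q : Measure X) {f : X → ℝ} (hb : ∃ C, ∀ x, |f x| ≤ C)
    (hf : LipschitzWith 1 f) : ((∫ x, f x ∂q - ∫ x, f x ∂p : ℝ) : EReal) ≤ dualW p q :=
  le_iSup (fun g : {f : X → ℝ // (∃ C, ∀ x, |f x| ≤ C) ∧ LipschitzWith 1 f} =>
    (((∫ x, g.1 x ∂q) - ∫ x, g.1 x ∂p : ℝ) : EReal)) ⟨f, hb, hf⟩

lemma dualW_nonneg (p q : Measure X) : 0 ≤ dualW p q := by
  simpa using le_dualW p q (f := fun _ => 0) ⟨0, by simp⟩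
    ((LipschitzWith.const 0).weaken zero_le_one)

lemma dualW_nonpos_iff {p q : Measure X} : dualW p q ≤ 0 ↔
    ∀ f : X → ℝ, (∃ C, ∀ x, |f x| ≤ C) → LipschitzWith 1 f → ∫ x, f x ∂q ≤ ∫ x, f x ∂p := by
  simp only [dualW, iSup_le_iff, EReal.coe_nonpos, sub_nonpos, Subtype.forall, and_imp]

lemma dualW_eq_zero_iff_forall_integral_le {p q : Measure X} : dualW p q = 0 ↔
    ∀ f : X → ℝ, (∃ C, ∀ x, |f x| ≤ C) → LipschitzWith 1 f → ∫ x, f x ∂q ≤ ∫ x, f x ∂p := by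
  rw [← dualW_nonpos_iff, (dualW_nonneg p q).ge_iff_eq']

lemma dualW_self (μ : Measure X) : dualW μ μ = 0 :=
  dualW_eq_zero_iff_forall_integral_le.mpr fun _ _ _ => le_rfl

lemma dualW_eq_zero_iff_eq [BorelSpace X] {p q : Measure X} [IsProbabilityMeasure p]
    [IsProbabilityMeasure q] : dualW p q = 0 ↔ p = q := by
  refine ⟨fun h => ?_, by rintro rfl; exact dualW_self p⟩
  have hle := dualW_eq_zero_iff_forall_integral_le.mp h
  refine Measure.ext_of_forall_integral_lipschitzWith_eq fun f hb hf =>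
    le_antisymm ?_ (hle f hb hf)
  simpa [integral_neg] using hle (fun x => -f x) (hb.imp fun _ hC x => by simpa using hC x) hf.neg

end dualW

lemma LipschitzWith.comp_fst_ofLp {α β γ : Type*} [PseudoEMetricSpace α] [PseudoEMetricSpace β]
    [PseudoEMetricSpace γ] {f : α → γ} (hf : LipschitzWith 1 f) :
    LipschitzWith 1 fun z : WithLp 1 (α × β) => f (WithLp.ofLp z).1 :=
  (hf.comp (LipschitzWith.prod_fst.comp (WithLp.prod_lipschitzWith_ofLp 1 α β))).weaken (by simp)

lemma MeasureTheory.integral_half_smul_add_half_smul {α E : Type*} [MeasurableSpace α]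
    [NormedAddCommGroup E] [NormedSpace ℝ E] {μ ν : Measure α} {f : α → E}
    (hμ : Integrable f μ) (hν : Integrable f ν) :
    ∫ x, f x ∂((1 / 2 : ℝ≥0∞) • μ + (1 / 2 : ℝ≥0∞) • ν) =
      (1 / 2 : ℝ) • ∫ x, f x ∂μ + (1 / 2 : ℝ) • ∫ x, f x ∂ν := by
  rw [integral_add_measure (hμ.smul_measure (by simp)) (hν.smul_measure (by simp)),
    integral_smul_measure, integral_smul_measure]
  norm_num

lemma MeasureTheory.integral_map_toLp_prod {α β E : Type*} [MeasurableSpace α]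
    [MeasurableSpace β] [NormedAddCommGroup E] [NormedSpace ℝ E] (μ : Measure (α × β)) (F : WithLp 1 (α × β) → E) :
    ∫ z, F z ∂(μ.map (WithLp.toLp 1)) = ∫ z, F (WithLp.toLp 1 z) ∂μ :=
  integral_map_equiv (MeasurableEquiv.toLp 1 (α × β)) F

lemma MeasureTheory.integral_fst_ofLp_map_toLp_prod {α β : Type*} [MeasurableSpace α]
    [MeasurableSpace β] (μ : Measure α) (ν : Measure β) [SFinite μ] [IsProbabilityMeasure ν]
    (f : α → ℝ) :
    ∫ z, f (WithLp.ofLp z).1 ∂((μ.prod ν).map (WithLp.toLp 1)) = ∫ x, f x ∂μ := by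
  rw [integral_map_toLp_prod, integral_fun_fst, probReal_univ, one_smul]

section miniBatch

variable {X : Type*} [MetricSpace X] [MeasurableSpace X]

noncomputable def miniBatchDualW (p q : Measure X) : EReal :=
  dualW (X := WithLp 1 (X × X)) ((p.prod p).map (WithLp.toLp 1))
    (((1 / 2 : ℝ≥0∞) • (q.prod p) + (1 / 2 : ℝ≥0∞) • (p.prod q)).map (WithLp.toLp 1))

lemma miniBatchDualW_self (μ : Measure X) : miniBatchDualW μ μ = 0 := by
  rw [miniBatchDualW, ← add_smul, ENNReal.add_halves, one_smul]
  exact dualW_self _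

variable [OpensMeasurableSpace X] {p q : Measure X} [IsProbabilityMeasure p]
  [IsProbabilityMeasure q]

lemma integral_fst_ofLp_mixture_sub {f : X → ℝ} (hf : Continuous f) (hb : ∃ C, ∀ x, |f x| ≤ C) :
    ∫ z, f (WithLp.ofLp z).1 ∂(((1 / 2 : ℝ≥0∞) • (q.prod p) + (1 / 2 : ℝ≥0∞) • (p.prod q)).map
      (WithLp.toLp 1)) - ∫ z, f (WithLp.ofLp z).1 ∂((p.prod p).map (WithLp.toLp 1)) =
      (1 / 2 : ℝ) * (∫ x, f x ∂q - ∫ x, f x ∂p) := by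
  obtain ⟨C, hC⟩ := hb
  have hint : ∀ μ ν : Measure X, [IsProbabilityMeasure μ] → [IsProbabilityMeasure ν] →
      Integrable (fun z : X × X => f z.1) (μ.prod ν) := fun μ ν _ _ =>
    .of_bound (hf.measurable.comp measurable_fst).aestronglyMeasurable C
      (.of_forall fun z => hC z.1)
  rw [integral_fst_ofLp_map_toLp_prod, integral_map_toLp_prod,
    integral_half_smul_add_half_smul (hint q p) (hint p q)]
  simp only [integral_fun_fst, probReal_univ, smul_eq_mul]
  ring

lemma dualW_eq_zero_of_miniBatchDualW_eq_zero (h : miniBatchDualW p q = 0) : dualW p q = 0 := by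
  refine dualW_eq_zero_iff_forall_integral_le.mpr fun f hb hf => ?_
  have hmix := dualW_eq_zero_iff_forall_integral_le.mp h _
    (hb.imp fun _ hC _ => hC _) hf.comp_fst_ofLp
  have hsub := integral_fst_ofLp_mixture_sub (p := p) (q := q) hf.continuous hb
  linarith

variable [BorelSpace X]

lemma miniBatchDualW_eq_zero_iff : miniBatchDualW p q = 0 ↔ dualW p q = 0 :=
  ⟨dualW_eq_zero_of_miniBatchDualW_eq_zero,
    fun h => dualW_eq_zero_iff_eq.mp h ▸ miniBatchDualW_self p⟩

end miniBatch

lemma measurable_erealToENNReal : Measurable erealToENNReal :=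
  Measurable.ite measurableSet_eq measurable_const
    (ENNReal.measurable_ofReal.comp measurable_ereal_toReal)

lemma erealToENNReal_eq_zero_iff {a : EReal} (ha : 0 ≤ a) : erealToENNReal a = 0 ↔ a = 0 := by
  induction a using EReal.rec with
  | bot => simp at ha
  | top => simp [erealToENNReal]
  | coe r =>
    rw [EReal.coe_nonneg] at ha
    simp [erealToENNReal, ha.ge_iff_eq']

lemma lintegral_erealToENNReal_eq_zero_iff {Y : Type*} [MeasurableSpace Y] {σ : Measure Y}
    {f : Y → EReal} (hf : Measurable f) (h0 : ∀ y, 0 ≤ f y) :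
    ∫⁻ y, erealToENNReal (f y) ∂σ = 0 ↔ ∀ᵐ y ∂σ, f y = 0 := by
  rw [lintegral_eq_zero_iff (f := fun y => erealToENNReal (f y))
    (measurable_erealToENNReal.comp hf)]
  exact Filter.eventually_congr (.of_forall fun y => erealToENNReal_eq_zero_iff (h0 y))

theorem expected_minibatch_dualW_eq_zero_iff_general {X Y : Type*}
    [MetricSpace X] [MeasurableSpace X] [BorelSpace X]
    [MeasurableSpace Y] (σ : Measure Y)
    (G Pi' : Y → Measure X)
    (hG : ∀ y, IsProbabilityMeasure (G y)) (hPi : ∀ y, IsProbabilityMeasure (Pi' y))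
    (hmeas₁ : Measurable fun y => dualW (G y) (Pi' y))
    (hmeas₂ : Measurable fun y =>
      dualW (X := WithLp 1 (X × X)) (((G y).prod (G y)).map (WithLp.toLp 1))
        (((1 / 2 : ℝ≥0∞) • ((Pi' y).prod (G y)) + (1 / 2 : ℝ≥0∞) • ((G y).prod (Pi' y))).map (WithLp.toLp 1))) :
    (∫⁻ y, erealToENNReal (dualW (X := WithLp 1 (X × X)) (((G y).prod (G y)).map (WithLp.toLp 1))
        (((1 / 2 : ℝ≥0∞) • ((Pi' y).prod (G y)) + (1 / 2 : ℝ≥0∞) • ((G y).prod (Pi' y))).map (WithLp.toLp 1))) ∂σ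
        = 0)
      ↔ ∫⁻ y, erealToENNReal (dualW (G y) (Pi' y)) ∂σ = 0 := by
  rw [lintegral_erealToENNReal_eq_zero_iff hmeas₂ fun _ => dualW_nonneg _ _,
    lintegral_erealToENNReal_eq_zero_iff hmeas₁ fun _ => dualW_nonneg _ _]
  refine Filter.eventually_congr (.of_forall fun y => ?_)
  have := hG y
  have := hPi y
  exact miniBatchDualW_eq_zero_iff

/-- The expected 'mini-batch' dual Wasserstein distance vanishes if and only if the
expected dual Wasserstein distance vanishes. Here `G` and `Pi'` are families of Borel
probability measures on `X` indexed by a probability space `(Y, σ)`, `X × X` carries the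
ℓ¹ metric, and both distance functions are assumed measurable and integrable. -/
theorem expected_minibatch_dualW_eq_zero_iff {X Y : Type*}
    [MetricSpace X] [MeasurableSpace X] [BorelSpace X]
    [MeasurableSpace Y] (σ : Measure Y) [IsProbabilityMeasure σ]
    (G Pi' : Y → Measure X)
    (hG : ∀ y, IsProbabilityMeasure (G y)) (hPi : ∀ y, IsProbabilityMeasure (Pi' y))
    (hmeas₁ : Measurable fun y => dualW (G y) (Pi' y))
    (hint₁ : ∫⁻ y, erealToENNReal (dualW (G y) (Pi' y)) ∂σ < ⊤)
    (hmeas₂ : Measurable fun y =>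
      dualW (X := WithLp 1 (X × X)) (((G y).prod (G y)).map (WithLp.toLp 1))
        (((1 / 2 : ℝ≥0∞) • ((Pi' y).prod (G y)) + (1 / 2 : ℝ≥0∞) • ((G y).prod (Pi' y))).map (WithLp.toLp 1)))
    (hint₂ : ∫⁻ y, erealToENNReal (dualW (X := WithLp 1 (X × X)) (((G y).prod (G y)).map (WithLp.toLp 1))
        (((1 / 2 : ℝ≥0∞) • ((Pi' y).prod (G y)) + (1 / 2 : ℝ≥0∞) • ((G y).prod (Pi' y))).map (WithLp.toLp 1))) ∂σ
      < ⊤) :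
    (∫⁻ y, erealToENNReal (dualW (X := WithLp 1 (X × X)) (((G y).prod (G y)).map (WithLp.toLp 1))
        (((1 / 2 : ℝ≥0∞) • ((Pi' y).prod (G y)) + (1 / 2 : ℝ≥0∞) • ((G y).prod (Pi' y))).map (WithLp.toLp 1))) ∂σ
        = 0)
      ↔ ∫⁻ y, erealToENNReal (dualW (G y) (Pi' y)) ∂σ = 0 :=
  expected_minibatch_dualW_eq_zero_iff_general σ G Pi' hG hPi hmeas₁ hmeas₂
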